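/- Let a, b ≥ 2 be coprime natural numbers and let i ≥ 1. Then the number of natural numbers m with 1 ≤ m ≤ a·b·i and ℓ(a,b,m) = i is exactly (a−1)(b−1)/2. (Here (a−1)(b−1) is even since a and b are coprime.) -/

import Mathlib

/-!
For `m ≥ 1`, the representations `m + a b = a x + b y` with `x > b` are those of `m` shifted by
`x ↦ x + b`, and since `a` is invertible modulo `b` there is exactly one with `x ≤ b`; hence
`ℓ(m + a b) = ℓ(m) + 1`, while `ℓ(m) ≤ 1` for `m ≤ a b`. So the `m ≤ a b i` with `ℓ(m) = i` are
the `r + a b (i - 1)` with `r ≤ a b` and `ℓ(r) = 1`, i.e. the values `a x + b y` at the lattice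
points of the triangle `x, y ≥ 1`, `a x + b y < a b`. No lattice point of the rectangle
`[1, b - 1] × [1, a - 1]` lies on the line `a x + b y = a b`, so the reflection
`(x, y) ↦ (b - x, a - y)` shows that the triangle contains half of its `(a - 1)(b - 1)` points.
-/

/-- `ell a b m` is the number of pairs `(i, j)` of positive integers with `m = a * i + b * j`. -/
noncomputable def ell (a b m : ℕ) : ℕ :=
  {p : ℕ × ℕ | 0 < p.1 ∧ 0 < p.2 ∧ m = a * p.1 + b * p.2}.ncard

open Finset

def posReps (a b m : ℕ) : Set (ℕ × ℕ) :=
  {p | 0 < p.1 ∧ 0 < p.2 ∧ m = a * p.1 + b * p.2}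

theorem ell_eq_ncard_posReps (a b m : ℕ) : ell a b m = (posReps a b m).ncard := rfl

theorem Nat.ModEq.eq_of_pos_of_le {b x y : ℕ} (h : x ≡ y [MOD b])
    (hx : 0 < x) (hxb : x ≤ b) (hy : 0 < y) (hyb : y ≤ b) : x = y := by
  wlog hxy : x ≤ y generalizing x y
  · exact (this h.symm hy hyb hx hxb (by omega)).symm
  have := Nat.eq_zero_of_dvd_of_lt ((Nat.modEq_iff_dvd' hxy).mp h) (by omega)
  omega

section

variable {a b m x y : ℕ}

theorem lt_and_lt_of_mul_add_mul_le (ha : 0 < a) (hb : 0 < b) (hx : 0 < x) (hy : 0 < y)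
    (h : a * x + b * y ≤ a * b) : x < b ∧ y < a := by
  constructor <;> by_contra! <;> nlinarith

theorem mul_add_mul_ne_mul (hab : Nat.Coprime a b) (hx : 0 < x) (hxb : x < b) :
    a * x + b * y ≠ a * b := by
  intro h
  have hdvd : b ∣ a * x + b * y := h ▸ dvd_mul_left b a
  have : b ∣ x := (Nat.coprime_comm.mp hab).dvd_of_dvd_mul_left
    ((Nat.dvd_add_left (dvd_mul_right b y)).mp hdvd)
  exact absurd (Nat.le_of_dvd hx this) (by omega)

theorem modEq_of_mul_add_mul_eq (hab : Nat.Coprime a b) {x' y' : ℕ}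
    (h : a * x + b * y = a * x' + b * y') : x ≡ x' [MOD b] := by
  refine Nat.ModEq.cancel_left_of_coprime (c := a) (Nat.coprime_comm.mp hab) ?_
  simpa [Nat.ModEq, Nat.mul_add_mod] using congrArg (· % b) h

theorem posReps_finite (ha : 0 < a) (hb : 0 < b) : (posReps a b m).Finite := by
  refine ((Set.finite_Iic m).prod (Set.finite_Iic m)).subset ?_
  rintro ⟨x, y⟩ ⟨-, -, rfl⟩
  constructor <;> simp only [Set.mem_Iic] <;> nlinarith

theorem posReps_zero (ha : 0 < a) : posReps a b 0 = ∅ := by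
  ext ⟨x, y⟩
  simp only [posReps, Set.mem_ofPred_eq, Set.mem_empty_iff_false, iff_false]
  rintro ⟨hx, -, h⟩
  nlinarith

theorem eq_of_mem_posReps_of_fst_le (hb : 0 < b) (hab : Nat.Coprime a b) {p q : ℕ × ℕ}
    (hp : p ∈ posReps a b m) (hq : q ∈ posReps a b m) (hpb : p.1 ≤ b) (hqb : q.1 ≤ b) :
    p = q := by
  obtain ⟨hp₁, -, rfl⟩ := hp
  obtain ⟨hq₁, -, hq⟩ := hq
  have h₁ : p.1 = q.1 := (modEq_of_mul_add_mul_eq hab hq).eq_of_pos_of_le hp₁ hpb hq₁ hqb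
  exact Prod.ext h₁ (Nat.eq_of_mul_eq_mul_left hb (by rw [h₁] at hq; omega))

theorem exists_mem_posReps_add_mul_fst_le (hb : 0 < b) (hab : Nat.Coprime a b) (hm : 0 < m) :
    ∃ p ∈ posReps a b (m + a * b), p.1 ≤ b := by
  -- solving `a x ≡ m + a b - a` with `x < b` makes `x + 1 ∈ [1, b]` a solution of `a x ≡ m + a b`
  obtain ⟨x, hxb, hx⟩ := Nat.exists_mul_mod_eq_of_coprime (m + a * b - a) hab hb.ne'
  have hle : a * (x + 1) ≤ a * b := Nat.mul_le_mul_left a hxb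
  have hmod : (m + a * b) % b = a * (x + 1) % b := by
    have : a ≤ a * b := Nat.le_mul_of_pos_right a hb
    calc (m + a * b) % b = ((m + a * b - a) % b + a) % b := by
          rw [Nat.mod_add_mod, Nat.sub_add_cancel (by omega)]
      _ = a * (x + 1) % b := by rw [← hx, Nat.mod_add_mod, mul_add_one]
  obtain ⟨y, hy⟩ := Nat.dvd_of_mod_eq_zero (Nat.sub_mod_eq_zero_of_mod_eq hmod)
  have hy₀ : 0 < y := Nat.pos_of_ne_zero (by rintro rfl; omega)
  refine ⟨(x + 1, y), ⟨x.succ_pos, hy₀, ?_⟩, hxb⟩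
  show m + a * b = a * (x + 1) + b * y
  omega

theorem ell_add_mul (ha : 0 < a) (hb : 0 < b) (hab : Nat.Coprime a b) (hm : 0 < m) :
    ell a b (m + a * b) = ell a b m + 1 := by
  obtain ⟨p₀, hp₀, hp₀b⟩ := exists_mem_posReps_add_mul_fst_le hb hab hm
  set shift : ℕ × ℕ → ℕ × ℕ := fun p => (p.1 + b, p.2)
  have hshift : shift.Injective := fun p q h => by
    simp only [shift, Prod.mk.injEq, Nat.add_right_cancel_iff] at h
    exact Prod.ext h.1 h.2
  have hsplit : posReps a b (m + a * b) = insert p₀ (shift '' posReps a b m) := by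
    ext ⟨x, y⟩
    constructor
    · intro hp
      by_cases hxb : x ≤ b
      · exact Or.inl (eq_of_mem_posReps_of_fst_le hb hab hp hp₀ hxb hp₀b)
      · obtain ⟨-, hy, h⟩ := hp
        dsimp only at h
        refine Or.inr ⟨(x - b, y), ⟨by omega, hy, ?_⟩, Prod.ext ?_ rfl⟩
        · dsimp only
          rw [Nat.mul_sub]
          have : a * b ≤ a * x := Nat.mul_le_mul_left a (by omega)
          omega
        · simp only [shift]
          omega
    · rintro (h | ⟨⟨x', y'⟩, ⟨hx', hy', rfl⟩, h⟩)
      · exact h ▸ hp₀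
      · simp only [shift, Prod.mk.injEq] at h
        obtain ⟨rfl, rfl⟩ := h
        exact ⟨by omega, hy', by ring⟩
  have hp₀_notMem : p₀ ∉ shift '' posReps a b m := by
    rintro ⟨p, hp, rfl⟩
    have := hp.1
    simp only [shift] at hp₀b
    omega
  rw [ell_eq_ncard_posReps, ell_eq_ncard_posReps, hsplit,
    Set.ncard_insert_of_notMem hp₀_notMem ((posReps_finite ha hb).image _),
    Set.ncard_image_of_injective _ hshift]

theorem ell_add_mul_mul (ha : 0 < a) (hb : 0 < b) (hab : Nat.Coprime a b) (hm : 0 < m)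
    (k : ℕ) : ell a b (m + a * b * k) = ell a b m + k := by
  induction k with
  | zero => simp
  | succ k ih =>
    rw [mul_add_one, ← add_assoc, ell_add_mul ha hb hab (by omega), ih, add_assoc]

theorem fst_lt_of_mem_posReps (ha : 0 < a) (hb : 0 < b) {p : ℕ × ℕ}
    (hp : p ∈ posReps a b m) (hm : m ≤ a * b) : p.1 < b :=
  (lt_and_lt_of_mul_add_mul_le ha hb hp.1 hp.2.1 (hp.2.2 ▸ hm)).1

theorem ell_le_one (ha : 0 < a) (hb : 0 < b) (hab : Nat.Coprime a b) (hm : m ≤ a * b) :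
    ell a b m ≤ 1 :=
  (Set.ncard_le_one (posReps_finite ha hb)).mpr fun _p hp _q hq =>
    eq_of_mem_posReps_of_fst_le hb hab hp hq (fst_lt_of_mem_posReps ha hb hp hm).le
      (fst_lt_of_mem_posReps ha hb hq hm).le

theorem ell_le_of_le_mul (ha : 0 < a) (hb : 0 < b) (hab : Nat.Coprime a b) {k : ℕ}
    (hm : m ≤ a * b * k) : ell a b m ≤ k := by
  induction k generalizing m with
  | zero => simp [Nat.eq_zero_of_le_zero hm, ell_eq_ncard_posReps, posReps_zero ha]
  | succ k ih =>
    by_cases hmab : m ≤ a * b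
    · exact (ell_le_one ha hb hab hmab).trans (by omega)
    · obtain ⟨m', rfl⟩ : ∃ m', m = m' + a * b := ⟨m - a * b, by omega⟩
      rw [ell_add_mul ha hb hab (by omega)]
      exact Nat.add_le_add_right (ih (by rw [mul_add_one] at hm; omega)) 1

theorem card_filter_ell_eq_add_one (ha : 0 < a) (hb : 0 < b) (hab : Nat.Coprime a b) (k : ℕ) :
    #{m ∈ Icc 1 (a * b * (k + 1)) | ell a b m = k + 1} =
      #{m ∈ Icc 1 (a * b) | ell a b m = 1} := by
  have hlt {m : ℕ} (hm : ell a b m = k + 1) : a * b * k < m := by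
    by_contra! h
    have := ell_le_of_le_mul ha hb hab h
    omega
  refine card_nbij' (· - a * b * k) (· + a * b * k) ?_ ?_ ?_ ?_
  · intro m hm
    simp only [coe_filter, mem_Icc, Set.mem_ofPred_eq] at hm ⊢
    obtain ⟨⟨-, hm⟩, hell⟩ := hm
    have hk := hlt hell
    have := ell_add_mul_mul ha hb hab (m := m - a * b * k) (by omega) k
    rw [Nat.sub_add_cancel hk.le] at this
    exact ⟨⟨by omega, by rw [mul_add_one] at hm; omega⟩, by omega⟩
  · intro m hm
    simp only [coe_filter, mem_Icc, Set.mem_ofPred_eq] at hm ⊢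
    obtain ⟨⟨hm₁, hm⟩, hell⟩ := hm
    rw [ell_add_mul_mul ha hb hab hm₁, hell]
    exact ⟨⟨by omega, by rw [mul_add_one]; omega⟩, add_comm 1 k⟩
  · intro m hm
    simp only [coe_filter, mem_Icc, Set.mem_ofPred_eq] at hm
    exact Nat.sub_add_cancel (hlt hm.2).le
  · intro m _
    exact Nat.add_sub_cancel m _

theorem card_filter_ell_eq_one (ha : 0 < a) (hb : 0 < b) (hab : Nat.Coprime a b) :
    #{m ∈ Icc 1 (a * b) | ell a b m = 1} =
      #{p ∈ Icc 1 (b - 1) ×ˢ Icc 1 (a - 1) | a * p.1 + b * p.2 < a * b} := by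
  symm
  refine card_nbij (fun p => a * p.1 + b * p.2) ?_ ?_ ?_
  · rintro ⟨x, y⟩ hp
    simp only [coe_filter, mem_product, mem_Icc, Set.mem_ofPred_eq] at hp ⊢
    obtain ⟨⟨⟨hx, -⟩, hy, -⟩, hlt⟩ := hp
    have hpos : 0 < ell a b (a * x + b * y) :=
      (Set.ncard_pos (posReps_finite ha hb)).mpr ⟨(x, y), hx, hy, rfl⟩
    exact ⟨⟨by nlinarith, hlt.le⟩, le_antisymm (ell_le_one ha hb hab hlt.le) hpos⟩
  · rintro ⟨x, y⟩ hp ⟨x', y'⟩ hq h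
    simp only [coe_filter, mem_product, mem_Icc, Set.mem_ofPred_eq] at hp hq h
    exact eq_of_mem_posReps_of_fst_le hb hab ⟨hp.1.1.1, hp.1.2.1, rfl⟩
      ⟨hq.1.1.1, hq.1.2.1, h⟩ (by omega) (by omega)
  · intro m hm
    simp only [coe_filter, mem_Icc, Set.mem_ofPred_eq] at hm
    obtain ⟨⟨-, hm⟩, hell⟩ := hm
    rw [ell_eq_ncard_posReps, Set.ncard_eq_one] at hell
    obtain ⟨p, hp⟩ := hell
    obtain ⟨hx, hy, rfl⟩ : p ∈ posReps a b m := hp ▸ Set.mem_singleton p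
    obtain ⟨hxb, hya⟩ := lt_and_lt_of_mul_add_mul_le ha hb hx hy hm
    have := mul_add_mul_ne_mul hab hx hxb (y := p.2)
    refine ⟨p, ?_, rfl⟩
    simp only [coe_filter, mem_product, mem_Icc, Set.mem_ofPred_eq]
    omega

theorem card_filter_mul_add_mul_lt (hab : Nat.Coprime a b) :
    #{p ∈ Icc 1 (b - 1) ×ˢ Icc 1 (a - 1) | a * p.1 + b * p.2 < a * b} =
      (a - 1) * (b - 1) / 2 := by
  set R := Icc 1 (b - 1) ×ˢ Icc 1 (a - 1)
  have hsum {x y : ℕ} (hx : x ≤ b) (hy : y ≤ a) :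
      a * (b - x) + b * (a - y) + (a * x + b * y) = 2 * (a * b) := by
    obtain ⟨u, rfl⟩ := Nat.exists_eq_add_of_le hx
    obtain ⟨v, rfl⟩ := Nat.exists_eq_add_of_le hy
    simp only [Nat.add_sub_cancel_left]
    ring
  have hreflect :
      #{p ∈ R | a * p.1 + b * p.2 < a * b} = #{p ∈ R | ¬ a * p.1 + b * p.2 < a * b} := by
    refine card_nbij' (fun p => (b - p.1, a - p.2)) (fun p => (b - p.1, a - p.2)) ?_ ?_ ?_ ?_
    · rintro ⟨x, y⟩ hp
      simp only [R, coe_filter, mem_product, mem_Icc, Set.mem_ofPred_eq] at hp ⊢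
      have := hsum (x := x) (y := y) (by omega) (by omega)
      omega
    · rintro ⟨x, y⟩ hp
      simp only [R, coe_filter, mem_product, mem_Icc, Set.mem_ofPred_eq] at hp ⊢
      have := hsum (x := x) (y := y) (by omega) (by omega)
      have := mul_add_mul_ne_mul hab hp.1.1.1 (by omega) (y := y)
      omega
    all_goals
      rintro ⟨x, y⟩ hp
      simp only [R, coe_filter, mem_product, mem_Icc, Set.mem_ofPred_eq] at hp
      ext <;> dsimp only <;> omega
  have hR : #R = (a - 1) * (b - 1) := by simp [R, card_product, mul_comm]
  have := card_filter_add_card_filter_not (s := R) (fun p => a * p.1 + b * p.2 < a * b)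
  omega

end

theorem card_M_i (a b : ℕ) (ha : 2 ≤ a) (hb : 2 ≤ b)
    (hab : Nat.gcd a b = 1) (i : ℕ) (hi : 1 ≤ i) :
    ((Finset.Icc 1 (a * b * i)).filter (fun m => ell a b m = i)).card =
      (a - 1) * (b - 1) / 2 := by
  obtain ⟨k, rfl⟩ : ∃ k, i = k + 1 := ⟨i - 1, by omega⟩
  have ha₀ : 0 < a := by omega
  have hb₀ : 0 < b := by omega
  rw [card_filter_ell_eq_add_one ha₀ hb₀ hab, card_filter_ell_eq_one ha₀ hb₀ hab,
    card_filter_mul_add_mul_lt hab]
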